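/- Let f : ℕ → ℝ, let G be a finite simple graph with ∇_r(G) ≤ f(r) for every r ∈ ℕ, let S ⊆ V(G), and let δ > 0. Let 𝒞₁,…,𝒞_t be pairwise disjoint nonempty sets of connected components of G − S such that: every component C in ⋃ᵢ 𝒞ᵢ has diameter at most δ (as an induced subgraph of G) and has at least one neighbor in S, and for all components C, C' ∈ ⋃ᵢ 𝒞ᵢ, C and C' lie in the same set 𝒞ⱼ if and only if N_S(C) = N_S(C'). Then t ≤ (4^{f(δ+1)} + 2·f(δ+1))·|S|. -/

import Mathlib

/-- `H` is a shallow minor of `G` at depth `d`. -/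
def IsShallowMinorAtDepth {V W : Type*} (G : SimpleGraph V) (d : ℕ)
    (H : SimpleGraph W) : Prop :=
  ∃ ψ : W → Set V,
    (∀ w, (ψ w).Nonempty) ∧
    (∀ w₁ w₂, w₁ ≠ w₂ → Disjoint (ψ w₁) (ψ w₂)) ∧
    (∀ w, ∃ c : ψ w, ∀ u : ψ w,
      ∃ p : (SimpleGraph.induce (ψ w) G).Walk c u, p.length ≤ d) ∧
    (∀ w₁ w₂, w₁ ≠ w₂ →
      (H.Adj w₁ w₂ ↔ ∃ v₁ ∈ ψ w₁, ∃ v₂ ∈ ψ w₂, G.Adj v₁ v₂))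

/-- The greatest reduced average density (grad) of rank `d`. -/
noncomputable def grad {V : Type*} (G : SimpleGraph V) (d : ℕ) : ℝ :=
  sSup { q : ℝ | ∃ (n : ℕ) (H : SimpleGraph (Fin n)), 0 < n ∧
    IsShallowMinorAtDepth G d H ∧ q = (H.edgeSet.ncard : ℝ) / (n : ℝ) }

/-- `N_S(C)`: vertices of `S` having at least one neighbor in `C`. -/
def nbrIn {V : Type*} (G : SimpleGraph V) (S C : Set V) : Set V :=
  {v ∈ S | ∃ u ∈ C, G.Adj v u}

/-- `C` is (the vertex set of) a connected component of `G − S`. -/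
def IsCompOf {V : Type*} (G : SimpleGraph V) (S : Set V) (C : Set V) : Prop :=
  C ⊆ Sᶜ ∧ C.Nonempty ∧ (SimpleGraph.induce C G).Connected ∧
    ∀ v ∈ Sᶜ, v ∉ C → ∀ u ∈ C, ¬ G.Adj u v

/-!
Let `N i ⊆ S` be the neighbourhood of the components of the `i`-th class; the sets `N i` are
distinct and nonempty. Take a maximal matching between classes `i` and pairs `{a, b} ⊆ N i`,
`a ≠ b`. Contracting the component of each matched class into one end of its pair gives a
depth-`(δ + 1)` shallow minor of `G` on any `T ⊆ S` in which the matched pairs inside `T` are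
distinct edges; so, with `d = f (δ + 1)`, at most `d |T|` matched pairs lie inside `T`. Hence at
most `d |S|` classes are matched, and the graph of matched pairs is `⌊2d⌋`-degenerate on `S`, so it
has at most `2 ^ ⌊2d⌋ |S|` nonempty cliques. By maximality the neighbourhood of an unmatched class
is such a clique, and `t ≤ (d + 2 ^ ⌊2d⌋) |S| ≤ (4 ^ d + 2d) |S|`.
-/

open Finset Function

section ShallowMinor

variable {V W : Type*} {G : SimpleGraph V} {d : ℕ}

lemma IsShallowMinorAtDepth.card_le [Fintype V] [Fintype W] {H : SimpleGraph W}
    (hH : IsShallowMinorAtDepth G d H) : Fintype.card W ≤ Fintype.card V := by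
  obtain ⟨ψ, hne, hdisj, -, -⟩ := hH
  choose pick hpick using hne
  refine Fintype.card_le_of_injective pick fun w₁ w₂ h => ?_
  by_contra hw
  exact Set.disjoint_left.1 (hdisj w₁ w₂ hw) (hpick w₁) (h ▸ hpick w₂)

lemma IsShallowMinorAtDepth.comap_equiv {W' : Type*} {H : SimpleGraph W}
    (hH : IsShallowMinorAtDepth G d H) (e : W' ≃ W) :
    IsShallowMinorAtDepth G d (H.comap e) := by
  obtain ⟨ψ, hne, hdisj, hrad, hadj⟩ := hH
  exact ⟨ψ ∘ e, fun _ => hne _, fun _ _ h => hdisj _ _ (e.injective.ne h), fun _ => hrad _,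
    fun _ _ h => hadj _ _ (e.injective.ne h)⟩

lemma bddAbove_grad_set [Fintype V] :
    BddAbove {q : ℝ | ∃ (n : ℕ) (H : SimpleGraph (Fin n)), 0 < n ∧
      IsShallowMinorAtDepth G d H ∧ q = (H.edgeSet.ncard : ℝ) / (n : ℝ)} := by
  refine ⟨Fintype.card V, ?_⟩
  rintro _ ⟨n, H, hn, hH, rfl⟩
  have hnV : n ≤ Fintype.card V := by simpa using hH.card_le
  have hE : H.edgeSet.ncard ≤ n * n := by
    calc H.edgeSet.ncard ≤ Nat.card (Sym2 (Fin n)) := Set.ncard_le_card _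
      _ = (n + 1) * n / 2 := by simp [Nat.card_eq_fintype_card, Sym2.card, Nat.choose_two_right]
      _ ≤ n * n := Nat.div_le_of_le_mul (by nlinarith)
  rw [div_le_iff₀ (by positivity)]
  exact_mod_cast hE.trans (Nat.mul_le_mul_right n hnV)

lemma grad_nonneg : 0 ≤ grad G d :=
  Real.sSup_nonneg <| by rintro _ ⟨n, H, -, -, rfl⟩; positivity

lemma IsShallowMinorAtDepth.ncard_edgeSet_le [Fintype V] [Fintype W] {H : SimpleGraph W}
    (hH : IsShallowMinorAtDepth G d H) :
    (H.edgeSet.ncard : ℝ) ≤ grad G d * Fintype.card W := by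
  obtain hW | hW := isEmpty_or_nonempty W
  · simp [Set.eq_empty_of_isEmpty H.edgeSet]
  let e := (Fintype.equivFin W).symm
  have hE : (H.comap e).edgeSet.ncard = H.edgeSet.ncard := by
    rw [← Nat.card_coe_set_eq, ← Nat.card_coe_set_eq]
    exact Nat.card_congr (SimpleGraph.Iso.comap e H).mapEdgeSet
  have := le_csSup bddAbove_grad_set ⟨_, _, Fintype.card_pos, hH.comap_equiv e, rfl⟩
  rwa [hE, div_le_iff₀ (by exact_mod_cast Fintype.card_pos)] at this

lemma isShallowMinorAtDepth_fromRel (ψ : W → Set V) (c : W → V) (hc : ∀ w, c w ∈ ψ w)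
    (hdisj : Pairwise (Disjoint on ψ))
    (hrad : ∀ w u (hu : u ∈ ψ w), ∃ p : (G.induce (ψ w)).Walk ⟨c w, hc w⟩ ⟨u, hu⟩, p.length ≤ d) :
    IsShallowMinorAtDepth G d (.fromRel fun a b => ∃ v ∈ ψ a, ∃ v' ∈ ψ b, G.Adj v v') := by
  refine ⟨ψ, fun w => ⟨c w, hc w⟩, hdisj, fun w => ⟨⟨c w, hc w⟩, fun u => hrad w u u.2⟩,
    fun a b hab => ?_⟩
  rw [SimpleGraph.fromRel_adj]
  refine ⟨fun h => h.2.elim id ?_, fun h => ⟨hab, .inl h⟩⟩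
  rintro ⟨v', hv', v, hv, h⟩
  exact ⟨v, hv, v', hv', h.symm⟩

end ShallowMinor

section Components

variable {V : Type*} {G : SimpleGraph V} {S C D : Set V}

lemma IsCompOf.subset_of_mem (hC : IsCompOf G S C) (hD : IsCompOf G S D) {v : V}
    (hvC : v ∈ C) (hvD : v ∈ D) : C ⊆ D := by
  suffices h : ∀ {a b : C}, (G.induce C).Walk a b → (a : V) ∈ D → (b : V) ∈ D from
    fun u hu => h (hC.2.2.1.preconnected ⟨v, hvC⟩ ⟨u, hu⟩).some hvD
  intro a b p
  induction p with
  | nil => exact id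
  | cons hadj _ ih =>
    exact fun ha => ih <| by_contra fun hb => hD.2.2.2 _ (hC.1 (Subtype.prop _)) hb _ ha hadj

lemma IsCompOf.eq_of_mem (hC : IsCompOf G S C) (hD : IsCompOf G S D) {v : V}
    (hvC : v ∈ C) (hvD : v ∈ D) : C = D :=
  (hC.subset_of_mem hD hvC hvD).antisymm (hD.subset_of_mem hC hvD hvC)

lemma exists_walk_induce_length_le_succ {B : Set V} (hCB : C ⊆ B) {a x u : V} (ha : a ∈ B)
    (hx : x ∈ C) (hu : u ∈ C) (hax : G.Adj a x) {δ : ℕ}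
    (hdiam : ∃ p : (G.induce C).Walk ⟨x, hx⟩ ⟨u, hu⟩, p.length ≤ δ) :
    ∃ p : (G.induce B).Walk ⟨a, ha⟩ ⟨u, hCB hu⟩, p.length ≤ δ + 1 := by
  obtain ⟨p, hp⟩ := hdiam
  let q : (G.induce B).Walk ⟨x, hCB hx⟩ ⟨u, hCB hu⟩ := p.map (G.induceHomOfLE hCB).toHom
  exact ⟨.cons (show (G.induce B).Adj ⟨a, ha⟩ ⟨x, hCB hx⟩ from hax) q,
    Nat.succ_le_succ ((p.length_map _).trans_le hp)⟩

end Components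

section PairMinor

variable {V : Type*} [Fintype V] {G : SimpleGraph V} {S : Set V} {δ : ℕ}

theorem card_le_grad_mul_card_of_components_joining_pairs {ι : Type*} (A : Finset ι)
    (C : ι → Set V) (e : ι → Sym2 V) (T : Finset V) (hTS : ↑T ⊆ S)
    (hC : ∀ i ∈ A, IsCompOf G S (C i)) (hCinj : Set.InjOn C A)
    (hdiam : ∀ i ∈ A, ∀ u v : C i, ∃ p : (G.induce (C i)).Walk u v, p.length ≤ δ)
    (he : ∀ i ∈ A, ¬ (e i).IsDiag ∧ e i ∈ T.sym2 ∧ ∀ a ∈ e i, a ∈ nbrIn G S (C i))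
    (heinj : Set.InjOn e A) :
    (#A : ℝ) ≤ grad G (δ + 1) * #T := by
  -- the component `C i` is contracted into the first endpoint of `e i`
  let bag (a : T) : Set V := {v | v = a ∨ ∃ i ∈ A, (e i).out.1 = a ∧ v ∈ C i}
  have hbag : ∀ a, (a : V) ∈ bag a := fun a => .inl rfl
  have hdisj : Pairwise (Disjoint on bag) := by
    intro a b hab
    refine Set.disjoint_left.2 ?_
    rintro v (hva | ⟨i, hi, hia, hvi⟩) (hvb | ⟨j, hj, hjb, hvj⟩)
    · exact hab (Subtype.ext (hva.symm.trans hvb))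
    · exact (hC j hj).1 hvj (hva ▸ hTS a.2)
    · exact (hC i hi).1 hvi (hvb ▸ hTS b.2)
    · obtain rfl := hCinj hi hj ((hC i hi).eq_of_mem (hC j hj) hvi hvj)
      exact hab (Subtype.ext (hia.symm.trans hjb))
  have hrad : ∀ a u (hu : u ∈ bag a),
      ∃ p : (G.induce (bag a)).Walk ⟨a, hbag a⟩ ⟨u, hu⟩, p.length ≤ δ + 1 := by
    rintro a u (rfl | ⟨i, hi, hia, hui⟩)
    · exact ⟨.nil, by simp⟩
    obtain ⟨-, x, hx, hax⟩ := (he i hi).2.2 _ (e i).out_fst_mem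
    exact exists_walk_induce_length_le_succ (fun v hv => .inr ⟨i, hi, hia, hv⟩) _ hx hui
      (hia ▸ hax) (hdiam i hi ⟨x, hx⟩ ⟨u, hui⟩)
  have hminor := isShallowMinorAtDepth_fromRel bag (↑) hbag hdisj hrad
  set H := SimpleGraph.fromRel fun a b => ∃ v ∈ bag a, ∃ v' ∈ bag b, G.Adj v v'
  have hedge : ∀ i ∈ A, e i ∈ Sym2.map Subtype.val '' H.edgeSet := by
    intro i hi
    obtain ⟨hdiag, hT, hN⟩ := he i hi
    have hout : s((e i).out.1, (e i).out.2) = e i := Quot.out_eq _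
    obtain ⟨-, y, hy, hby⟩ := hN _ (e i).out_snd_mem
    refine ⟨s(⟨_, mem_sym2_iff.1 hT _ (e i).out_fst_mem⟩,
      ⟨_, mem_sym2_iff.1 hT _ (e i).out_snd_mem⟩), ?_, hout⟩
    refine (H.mem_edgeSet.2 ((SimpleGraph.fromRel_adj _ _ _).2 ⟨fun h => hdiag ?_, .inl ?_⟩))
    · rw [← hout, Sym2.mk_isDiag_iff]
      exact congrArg Subtype.val h
    · exact ⟨y, .inr ⟨i, hi, rfl, hy⟩, _, .inl rfl, hby.symm⟩
  calc (#A : ℝ) ≤ (Sym2.map Subtype.val '' H.edgeSet).ncard := by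
        exact_mod_cast (Set.ncard_coe_finset A).symm.trans_le
          (Set.ncard_le_ncard_of_injOn e hedge heinj (Set.toFinite _))
    _ = H.edgeSet.ncard := by
        rw [Set.ncard_image_of_injective _ (Sym2.map.injective Subtype.val_injective)]
    _ ≤ grad G (δ + 1) * #T := by simpa using hminor.ncard_edgeSet_le

end PairMinor

section Matching

variable {α β : Type*}

def IsBipartiteMatching (R : α → β → Prop) (M : Finset (α × β)) : Prop :=
  (∀ x ∈ M, R x.1 x.2) ∧ Set.InjOn Prod.fst (M : Set (α × β)) ∧ Set.InjOn Prod.snd (M : Set (α × β))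

lemma exists_maximal_isBipartiteMatching [Finite α] [Finite β] [DecidableEq α] [DecidableEq β]
    (R : α → β → Prop) : ∃ M, IsBipartiteMatching R M ∧
      ∀ a b, R a b → a ∈ M.image Prod.fst ∨ b ∈ M.image Prod.snd := by
  obtain ⟨M, hM, hmax⟩ := (Set.toFinite {M | IsBipartiteMatching R M}).exists_maximal
    ⟨∅, by simp [IsBipartiteMatching]⟩
  refine ⟨M, hM, fun a b hab => ?_⟩
  by_contra! h
  have hnew : (a, b) ∉ M := fun hab' => h.1 (mem_image_of_mem _ hab')
  have hins : IsBipartiteMatching R (insert (a, b) M) := by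
    refine ⟨?_, ?_, ?_⟩
    · simpa [hab] using hM.1
    · rw [coe_insert, Set.injOn_insert hnew]
      exact ⟨hM.2.1, by simpa using h.1⟩
    · rw [coe_insert, Set.injOn_insert hnew]
      exact ⟨hM.2.2, by simpa using h.2⟩
  exact hnew (hmax hins (subset_insert _ _) (mem_insert_self _ _))

end Matching

section Degenerate

variable {V : Type*} [DecidableEq V] (Q : SimpleGraph V) [DecidableRel Q.Adj]

lemma SimpleGraph.sum_card_adj_le_two_mul (T : Finset V) :
    ∑ v ∈ T, #{u ∈ T | Q.Adj v u} ≤ 2 * #{e ∈ T.sym2 | e ∈ Q.edgeSet} := by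
  have hpairs : ∑ v ∈ T, #{u ∈ T | Q.Adj v u} = #{p ∈ T ×ˢ T | Q.Adj p.1 p.2} := by
    simp only [card_filter, sum_product]
  rw [hpairs]
  refine card_le_mul_card_image_of_maps_to (f := fun p => s(p.1, p.2)) ?_ 2 ?_
  · intro p hp
    obtain ⟨hpT, hadj⟩ := mem_filter.1 hp
    obtain ⟨h1, h2⟩ := mem_product.1 hpT
    exact mem_filter.2 ⟨mk_mem_sym2_iff.2 ⟨h1, h2⟩, hadj⟩
  · intro e _
    induction e using Sym2.ind with | _ a b => ?_
    refine (card_le_card (t := {(a, b), (b, a)}) fun p hp => ?_).trans card_le_two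
    rcases Sym2.eq_iff.1 (mem_filter.1 hp).2 with ⟨rfl, rfl⟩ | ⟨rfl, rfl⟩ <;> simp

lemma SimpleGraph.exists_card_adj_le_floor {T : Finset V} (hT : T.Nonempty) {d : ℝ}
    (hd : (#{e ∈ T.sym2 | e ∈ Q.edgeSet} : ℝ) ≤ d * #T) :
    ∃ v ∈ T, #{u ∈ T | Q.Adj v u} ≤ ⌊2 * d⌋₊ := by
  by_contra! h
  have hsum : (⌊2 * d⌋₊ + 1) * #T ≤ 2 * #{e ∈ T.sym2 | e ∈ Q.edgeSet} := by
    refine le_trans ?_ (Q.sum_card_adj_le_two_mul T)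
    rw [mul_comm, ← smul_eq_mul, ← sum_const]
    exact sum_le_sum h
  have hfloor : 2 * d < ⌊2 * d⌋₊ + 1 := Nat.lt_floor_add_one _
  have hTpos : (0 : ℝ) < #T := by exact_mod_cast hT.card_pos
  have hsum' : ((⌊2 * d⌋₊ : ℝ) + 1) * #T ≤ 2 * #{e ∈ T.sym2 | e ∈ Q.edgeSet} := by
    exact_mod_cast hsum
  nlinarith

lemma SimpleGraph.card_cliques_le_two_pow_mul_card {k : ℕ} (S : Finset V)
    (hdeg : ∀ T ⊆ S, T.Nonempty → ∃ v ∈ T, #{u ∈ T | Q.Adj v u} ≤ k) :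
    #(S.powerset.filter fun K : Finset V => K.Nonempty ∧ Q.IsClique (K : Set V)) ≤ 2 ^ k * #S := by
  induction S using Finset.strongInduction with | H S ih => ?_
  rcases S.eq_empty_or_nonempty with rfl | hS
  · simp
  obtain ⟨v, hv, hvdeg⟩ := hdeg S subset_rfl hS
  set cliques := S.powerset.filter fun K : Finset V => K.Nonempty ∧ Q.IsClique (K : Set V)
  -- a clique through `v` is `v` together with a set of neighbours of `v`, of which there are `≤ k`
  have hwith : #{K ∈ cliques | v ∈ K} ≤ 2 ^ k := by
    refine (card_le_card_of_injOn (fun K => K.erase v) (t := {u ∈ S | Q.Adj v u}.powerset)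
      ?_ ?_).trans ?_
    · intro K hK
      obtain ⟨hK, hvK⟩ := mem_filter.1 hK
      obtain ⟨hKS, -, hKcl⟩ := mem_filter.1 hK
      refine mem_powerset.2 fun u hu => mem_filter.2 ⟨mem_powerset.1 hKS (mem_of_mem_erase hu), ?_⟩
      exact hKcl hvK (mem_of_mem_erase hu) (ne_of_mem_erase hu).symm
    · intro K hK K' hK' h
      rw [← insert_erase (mem_filter.1 hK).2, ← insert_erase (mem_filter.1 hK').2]
      exact congrArg (insert v) h
    · rw [card_powerset]
      exact Nat.pow_le_pow_right two_pos hvdeg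
  have hwithout : #{K ∈ cliques | v ∉ K} ≤ 2 ^ k * #(S.erase v) := by
    refine (card_le_card fun K hK => ?_).trans
      (ih _ (erase_ssubset hv) fun T hT => hdeg T (hT.trans (erase_subset _ _)))
    obtain ⟨hK, hvK⟩ := mem_filter.1 hK
    obtain ⟨hKS, hKcl⟩ := mem_filter.1 hK
    exact mem_filter.2 ⟨mem_powerset.2 fun u hu =>
      mem_erase.2 ⟨fun h => hvK (h ▸ hu), mem_powerset.1 hKS hu⟩, hKcl⟩
  rw [← card_filter_add_card_filter_not (fun K => v ∈ K), ← card_erase_add_one hv]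
  linarith

end Degenerate

theorem card_le_of_bipartiteMatchings_sparse {ι V : Type*} [Fintype ι] [Fintype V]
    [DecidableEq V] (S : Finset V) (N : ι → Finset V) (hNinj : Injective N)
    (hNS : ∀ i, N i ⊆ S) (hNne : ∀ i, (N i).Nonempty) (d : ℝ)
    (hsparse : ∀ M, IsBipartiteMatching (fun i e => ¬ e.IsDiag ∧ e ∈ (N i).sym2) M →
      ∀ T ⊆ S, (#{x ∈ M | x.2 ∈ T.sym2} : ℝ) ≤ d * #T) :
    (Fintype.card ι : ℝ) ≤ (d + 2 ^ ⌊2 * d⌋₊) * #S := by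
  classical
  obtain ⟨M, hM, hmax⟩ :=
    exists_maximal_isBipartiteMatching fun i (e : Sym2 V) => ¬ e.IsDiag ∧ e ∈ (N i).sym2
  let Q := SimpleGraph.fromEdgeSet (M.image Prod.snd : Set (Sym2 V))
  have hdeg : ∀ T ⊆ S, T.Nonempty → ∃ v ∈ T, #{u ∈ T | Q.Adj v u} ≤ ⌊2 * d⌋₊ := by
    refine fun T hT hTne => Q.exists_card_adj_le_floor hTne (le_trans ?_ (hsparse M hM T hT))
    refine Nat.cast_le.2 ((card_le_card (t := {x ∈ M | x.2 ∈ T.sym2}.image Prod.snd)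
      fun e he => ?_).trans card_image_le)
    obtain ⟨heT, heQ⟩ := mem_filter.1 he
    obtain ⟨x, hx, rfl⟩ := mem_image.1 (SimpleGraph.edgeSet_fromEdgeSet _ ▸ heQ).1
    exact mem_image_of_mem _ (mem_filter.2 ⟨hx, heT⟩)
  -- by maximality, every pair of distinct neighbours of an unmatched class is a matched pair
  have hclique : ∀ i ∉ M.image Prod.fst, Q.IsClique (N i : Set V) := by
    intro i hi a ha b hb hab
    refine (SimpleGraph.fromEdgeSet_adj _).2 ⟨?_, hab⟩
    refine (hmax i s(a, b) ⟨Sym2.mk_isDiag_iff.not.2 hab, ?_⟩).resolve_left hi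
    exact mk_mem_sym2_iff.2 ⟨ha, hb⟩
  have hmatched : (#(M.image Prod.fst) : ℝ) ≤ d * #S := by
    refine le_trans (Nat.cast_le.2 card_image_le) (le_of_eq_of_le ?_ (hsparse M hM S subset_rfl))
    rw [filter_true_of_mem fun x hx => sym2_mono (hNS x.1) (hM.1 x hx).2]
  have hunmatched : #(M.image Prod.fst)ᶜ ≤ 2 ^ ⌊2 * d⌋₊ * #S := by
    refine (card_le_card_of_injOn N (fun i hi => ?_) hNinj.injOn).trans
      (Q.card_cliques_le_two_pow_mul_card S hdeg)
    exact mem_filter.2 ⟨mem_powerset.2 (hNS i), hNne i, hclique i (mem_compl.1 hi)⟩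
  calc (Fintype.card ι : ℝ) = #(M.image Prod.fst) + #(M.image Prod.fst)ᶜ := by
        exact_mod_cast (card_add_card_compl _).symm
    _ ≤ d * #S + 2 ^ ⌊2 * d⌋₊ * #S := add_le_add hmatched (by exact_mod_cast hunmatched)
    _ = (d + 2 ^ ⌊2 * d⌋₊) * #S := by ring

lemma two_pow_floor_two_mul_le_four_rpow {d : ℝ} (hd : 0 ≤ d) :
    (2 : ℝ) ^ ⌊2 * d⌋₊ ≤ 4 ^ d := by
  rw [← Real.rpow_natCast, show (4 : ℝ) = 2 ^ (2 : ℝ) by norm_num, ← Real.rpow_mul zero_le_two]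
  exact Real.rpow_le_rpow_of_exponent_le one_le_two (Nat.floor_le (by positivity))

theorem few_neighborhood_classes_general
    {V : Type*} [Fintype V] (f : ℕ → ℝ) (G : SimpleGraph V)
    (hf : ∀ r : ℕ, grad G r ≤ f r)
    (S : Set V) (δ : ℕ) (t : ℕ) (𝒞 : Fin t → Set (Set V))
    (hne : ∀ i, (𝒞 i).Nonempty)
    (hcomp : ∀ i, ∀ C ∈ 𝒞 i, IsCompOf G S C)
    (hdiam : ∀ i, ∀ C ∈ 𝒞 i, ∀ u v : C,
      ∃ p : (SimpleGraph.induce C G).Walk u v, p.length ≤ δ)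
    (hnbr : ∀ i, ∀ C ∈ 𝒞 i, (nbrIn G S C).Nonempty)
    (hgroup : ∀ i j, ∀ C ∈ 𝒞 i, ∀ C' ∈ 𝒞 j, (i = j ↔ nbrIn G S C = nbrIn G S C')) :
    (t : ℝ) ≤ ((4 : ℝ) ^ (f (δ + 1)) + 2 * f (δ + 1)) * (S.ncard : ℝ) := by
  classical
  choose C hC using hne
  set d := f (δ + 1)
  let N i := (nbrIn G S (C i)).toFinset
  have hNinj : Injective N := fun i j h =>
    (hgroup i j _ (hC i) _ (hC j)).2 (by simpa [N] using h)
  have hCinj : Injective C := fun i j h => hNinj (by simp only [N, h])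
  have hsparse : ∀ M, IsBipartiteMatching (fun i e => ¬ e.IsDiag ∧ e ∈ (N i).sym2) M →
      ∀ T ⊆ S.toFinset, (#{x ∈ M | x.2 ∈ T.sym2} : ℝ) ≤ d * #T := by
    intro M hM T hT
    refine (card_le_grad_mul_card_of_components_joining_pairs _ (fun x => C x.1) Prod.snd T
      (by simpa using hT) (fun x _ => hcomp _ _ (hC _)) ?_ (fun x _ => hdiam _ _ (hC _))
      (fun x hx => ?_) (hM.2.2.mono (filter_subset _ _))).trans (by gcongr; exact hf _)
    · exact fun x hx y hy h => hM.2.1 (filter_subset _ _ hx) (filter_subset _ _ hy) (hCinj h)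
    · obtain ⟨hxM, hxT⟩ := mem_filter.1 hx
      obtain ⟨hdiag, hxN⟩ := hM.1 x hxM
      exact ⟨hdiag, hxT, fun a ha => Set.mem_toFinset.1 (mem_sym2_iff.1 hxN a ha)⟩
  have hd : 0 ≤ d := grad_nonneg.trans (hf _)
  calc (t : ℝ) = Fintype.card (Fin t) := by simp
    _ ≤ (d + 2 ^ ⌊2 * d⌋₊) * #S.toFinset :=
      card_le_of_bipartiteMatchings_sparse S.toFinset N hNinj
        (fun i => Set.toFinset_subset_toFinset.2 fun _ hv => hv.1)
        (fun i => Set.toFinset_nonempty.2 (hnbr i _ (hC i))) d hsparse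
    _ ≤ (4 ^ d + 2 * d) * S.ncard := by
      rw [Set.ncard_eq_toFinset_card']
      refine mul_le_mul_of_nonneg_right ?_ (Nat.cast_nonneg _)
      linarith [two_pow_floor_two_mul_le_four_rpow hd]

/-- If `∇_r(G) ≤ f(r)` for all `r` and `𝒞₁,…,𝒞_t` are pairwise disjoint nonempty
classes of connected components of `G − S`, each component of diameter at most `δ`
with a neighbor in `S`, grouped exactly by their neighborhood in `S`, then
`t ≤ (4^{f(δ+1)} + 2f(δ+1))·|S|`. -/
theorem few_neighborhood_classes
    {V : Type*} [Fintype V] (f : ℕ → ℝ) (G : SimpleGraph V)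
    (hf : ∀ r : ℕ, grad G r ≤ f r)
    (S : Set V) (δ : ℕ) (hδ : 0 < δ) (t : ℕ) (𝒞 : Fin t → Set (Set V))
    (hne : ∀ i, (𝒞 i).Nonempty)
    (hdisj : ∀ i j, i ≠ j → Disjoint (𝒞 i) (𝒞 j))
    (hcomp : ∀ i, ∀ C ∈ 𝒞 i, IsCompOf G S C)
    (hdiam : ∀ i, ∀ C ∈ 𝒞 i, ∀ u v : C,
      ∃ p : (SimpleGraph.induce C G).Walk u v, p.length ≤ δ)
    (hnbr : ∀ i, ∀ C ∈ 𝒞 i, (nbrIn G S C).Nonempty)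
    (hgroup : ∀ i j, ∀ C ∈ 𝒞 i, ∀ C' ∈ 𝒞 j, (i = j ↔ nbrIn G S C = nbrIn G S C')) :
    (t : ℝ) ≤ ((4 : ℝ) ^ (f (δ + 1)) + 2 * f (δ + 1)) * (S.ncard : ℝ) :=
  few_neighborhood_classes_general f G hf S δ t 𝒞 hne hcomp hdiam hnbr hgroup
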